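/- arXiv:2102.05421 — 3 statements merged into one kernel-verified Lean document; each statement's English description precedes it below -/
import Mathlib

section
/- In any semi-De Morgan algebra, for all elements a, b, c one has ¬(¬(¬a ∧ b) ∧ c) ≤ ¬(a ∧ c). -/
/-- In any semi-De Morgan algebra, `¬(¬(¬a ∧ b) ∧ c) ≤ ¬(a ∧ c)`. -/
theorem sdm_ineq {A : Type*} [DistribLattice A] [BoundedOrder A]
    (n : A → A) (hbot : n ⊥ = ⊤) (hor : ∀ x y, n (x ⊔ y) = n x ⊓ n y)
    (htop : n ⊤ = ⊥) (hmeet : ∀ x y, n (n (x ⊓ y)) = n (n x) ⊓ n (n y))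
    (htriple : ∀ x, n x = n (n (n x)))
    (a b c : A) :
    n (n (n a ⊓ b) ⊓ c) ≤ n (a ⊓ c) := by
  have anti : ∀ x y : A, x ≤ y → n y ≤ n x := by
    intro x y h
    have hs : x ⊔ y = y := sup_eq_right.mpr h
    have hxy : n y = n x ⊓ n y := by rw [← hor x y, hs]
    exact hxy.trans_le inf_le_left
  -- n(a⊓c) = n(nna⊓c)
  have h1 : n (n (a ⊓ c)) = n (n (n (n a) ⊓ c)) := by
    rw [hmeet, hmeet, ← htriple (n a)]
  have h2 : n (a ⊓ c) = n (n (n a) ⊓ c) := by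
    rw [htriple (a ⊓ c), h1, ← htriple]
  rw [h2]
  apply anti
  exact inf_le_inf_right c (anti _ _ inf_le_left)
end

section
/- Let A be a semi-De Morgan algebra. Define A* = { ¬a : a ∈ A } with operations ∧ (restricted from A), a ∨* b := ¬¬(a ∨ b), negation ¬ (restricted), and bounds ⊥, ⊤. Then A* is closed under these operations and forms a De Morgan algebra; in particular ¬¬a = a for all a ∈ A*. -/
/-- Let `A` be a semi-De Morgan algebra and `S = {¬a : a ∈ A}` with meet restricted
from `A`, join `a ∨* b := ¬¬(a ∨ b)`, negation restricted, and bounds `⊥, ⊤`.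
Then `S` is closed under these operations and forms a De Morgan algebra; in
particular `¬¬a = a` for all `a ∈ S`. -/
theorem sdm_star_deMorgan {A : Type*} [DistribLattice A] [BoundedOrder A]
    (n : A → A) (hbot : n ⊥ = ⊤) (hor : ∀ x y, n (x ⊔ y) = n x ⊓ n y)
    (htop : n ⊤ = ⊥) (hmeet : ∀ x y, n (n (x ⊓ y)) = n (n x) ⊓ n (n y))
    (htriple : ∀ x, n x = n (n (n x))) :
    let S : Set A := {x | ∃ a, x = n a}
    -- closure under the operations
    (⊥ ∈ S) ∧ (⊤ ∈ S) ∧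
    (∀ a ∈ S, ∀ b ∈ S, a ⊓ b ∈ S) ∧
    (∀ a ∈ S, ∀ b ∈ S, n (n (a ⊔ b)) ∈ S) ∧
    (∀ a ∈ S, n a ∈ S) ∧
    -- De Morgan algebra laws on S (with join `a ∨* b = ¬¬(a ∨ b)`)
    (∀ a ∈ S, n (n a) = a) ∧
    (∀ a ∈ S, ∀ b ∈ S, n (n (n (a ⊔ b))) = n a ⊓ n b) ∧
    (∀ a ∈ S, ∀ b ∈ S, n (a ⊓ b) = n (n (n a ⊔ n b))) := by
  intro S
  have hinv : ∀ a ∈ S, n (n a) = a := by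
    rintro a ⟨x, rfl⟩; exact (htriple x).symm
  refine ⟨⟨⊤, htop.symm⟩, ⟨⊥, hbot.symm⟩, ?_, ?_, ?_, hinv, ?_, ?_⟩
  · rintro a ⟨x, rfl⟩ b ⟨y, rfl⟩; exact ⟨x ⊔ y, (hor x y).symm⟩
  · intro a _ b _; exact ⟨n (a ⊔ b), rfl⟩
  · intro a _; exact ⟨a, rfl⟩
  · intro a _ b _; rw [← htriple, hor]
  · rintro a ⟨x, rfl⟩ b ⟨y, rfl⟩
    rw [hor (n (n x)) (n (n y)), ← htriple, ← htriple]
end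

section
/- In any semi-De Morgan algebra, the inequality ¬(¬p₁ ∧ p₂) ∧ ¬(¬(p₃ ∧ p₄) ∧ p₂) ≤ ¬(¬(p₁ ∧ p₄) ∧ p₂) holds for all elements p₁, p₂, p₃, p₄. -/
/-- Soundness of the rule `r^¬_∧` in semi-De Morgan algebras:
`¬(¬p₁ ∧ p₂) ∧ ¬(¬(p₃ ∧ p₄) ∧ p₂) ≤ ¬(¬(p₁ ∧ p₄) ∧ p₂)`. -/
theorem sdm_rule_sound {A : Type*} [DistribLattice A] [BoundedOrder A]
    (n : A → A) (hbot : n ⊥ = ⊤) (hor : ∀ x y, n (x ⊔ y) = n x ⊓ n y)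
    (htop : n ⊤ = ⊥) (hmeet : ∀ x y, n (n (x ⊓ y)) = n (n x) ⊓ n (n y))
    (htriple : ∀ x, n x = n (n (n x)))
    (p₁ p₂ p₃ p₄ : A) :
    n (n p₁ ⊓ p₂) ⊓ n (n (p₃ ⊓ p₄) ⊓ p₂) ≤ n (n (p₁ ⊓ p₄) ⊓ p₂) := by
  have anti : ∀ x y : A, x ≤ y → n y ≤ n x := by
    intro x y hxy
    have h := hor x y
    rw [sup_eq_right.mpr hxy] at h
    rw [h]
    exact inf_le_left
  -- collapse LHS
  have key : n (n p₁ ⊓ p₂) ⊓ n (n (p₃ ⊓ p₄) ⊓ p₂)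
      = n ((n p₁ ⊔ n (p₃ ⊓ p₄)) ⊓ p₂) := by
    rw [inf_sup_right, hor]
  rw [key]
  -- double negations
  have hE : n (n ((n p₁ ⊔ n (p₃ ⊓ p₄)) ⊓ p₂))
      = n (n (n p₁) ⊓ (n (n p₃) ⊓ n (n p₄))) ⊓ n (n p₂) := by
    rw [hmeet, hor, hmeet]
  have hF : n (n (n (p₁ ⊓ p₄) ⊓ p₂))
      = n (n (n p₁) ⊓ n (n p₄)) ⊓ n (n p₂) := by
    rw [hmeet, hmeet]
  calc n ((n p₁ ⊔ n (p₃ ⊓ p₄)) ⊓ p₂)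
      = n (n (n ((n p₁ ⊔ n (p₃ ⊓ p₄)) ⊓ p₂))) := htriple _
    _ ≤ n (n (n (n (p₁ ⊓ p₄) ⊓ p₂))) := by
        apply anti
        rw [hE, hF]
        apply inf_le_inf_right
        apply anti
        exact inf_le_inf_left _ inf_le_right
    _ = n (n (p₁ ⊓ p₄) ⊓ p₂) := (htriple _).symm
end
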